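/- Let P and P̃ be reversible with respect to π and π̃(dx) = π(dx)ρ(x)/π(ρ) respectively, related by P(x,A) = ρ(x)P̃(x,A) + (1−ρ(x))1_A(x) with ρ : E → (0,1]. For f with π(f) = 0, if f/ρ ∈ L²₀(E, π̃) and var(f/ρ, P̃) < ∞, then var(f, P) ≤ π(ρ)·var(f/ρ, P̃) + π(f²/ρ) − π(f²) < ∞. -/

import Mathlib

open MeasureTheory ProbabilityTheory ENNReal

/-- The (real-valued) Dirichlet form `𝓔_K(g) = (1/2)∫ ν(dx) K(x,dy) (g(y) − g(x))²`. -/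
noncomputable def dirichletFormR {α : Type*} [MeasurableSpace α] (ν : Measure α)
    (K : α → Measure α) (g : α → ℝ) : ℝ :=
  (1 / 2) * ∫ x, ∫ y, (g y - g x) ^ 2 ∂(K x) ∂ν

/-- Reversibility of a kernel `K` with respect to `ν`. -/
def IsReversible {α : Type*} [MeasurableSpace α] (ν : Measure α) (K : α → Measure α) : Prop :=
  ∀ A B : Set α, MeasurableSet A → MeasurableSet B →
    ∫⁻ x in A, K x B ∂ν = ∫⁻ x in B, K x A ∂ν

/-- The asymptotic variance of ergodic averages of `g` for a `ν`-reversible kernel `K`,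
via the Caracciolo–Pescatori–Sokal variational representation
`var(g, K) = 2 [sup_{h ∈ L²(ν)} (2⟨g,h⟩_ν − 𝓔_K(h))] − ⟨g,g⟩_ν`, valued in `ℝ≥0∞`. -/
noncomputable def asympVar {α : Type*} [MeasurableSpace α] (ν : Measure α)
    (K : α → Measure α) (g : α → ℝ) : ℝ≥0∞ :=
  2 * (⨆ h : {h : α → ℝ // MemLp h 2 ν},
        ENNReal.ofReal (2 * ∫ x, g x * h.1 x ∂ν - dirichletFormR ν K h.1))
    - ENNReal.ofReal (∫ x, g x ^ 2 ∂ν)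

/-!
The asymptotic variance is defined through the Caracciolo–Pescatori–Sokal variational formula,
so it suffices to compare the two variational problems test function by test function. A test
function `h ∈ L²(π)` is also in `L²(π̃)` because `π̃ ≤ π(ρ)⁻¹ π`. For such `h` the holding part
`(1 − ρ(x)) δ_x` of `P` contributes nothing to `∫ (h(y) − h(x))² P(x, dy)`, whence
`𝓔_P(h) = π(ρ) 𝓔_P̃(h)`, and `⟨f, h⟩_π = π(ρ) ⟨f/ρ, h⟩_π̃`. Hence the supremum for `(f, P)` is
at most `π(ρ)` times the one for `(f/ρ, P̃)`, and the constants `⟨f, f⟩_π` and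
`π(ρ) ⟨f/ρ, f/ρ⟩_π̃ = π(f²/ρ)` account for the remaining terms.
Below, `π̃ = reweighted π ρ` and `P = lazyKernel ρ P̃`.
-/

section

variable {E : Type*} [MeasurableSpace E]

noncomputable def reweighted (π : Measure E) (ρ : E → ℝ) : Measure E :=
  (∫⁻ x, ENNReal.ofReal (ρ x) ∂π)⁻¹ • π.withDensity (fun x => ENNReal.ofReal (ρ x))

noncomputable def lazyKernel (ρ : E → ℝ) (K : E → Measure E) : E → Measure E :=
  fun x => ENNReal.ofReal (ρ x) • K x + ENNReal.ofReal (1 - ρ x) • Measure.dirac x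

noncomputable def variationalSup (ν : Measure E) (K : E → Measure E) (g : E → ℝ) : ℝ≥0∞ :=
  ⨆ h : {h : E → ℝ // MemLp h 2 ν},
    ENNReal.ofReal (2 * ∫ x, g x * h.1 x ∂ν - dirichletFormR ν K h.1)

theorem asympVar_eq_variationalSup (ν : Measure E) (K : E → Measure E) (g : E → ℝ) :
    asympVar ν K g = 2 * variationalSup ν K g - ENNReal.ofReal (∫ x, g x ^ 2 ∂ν) :=
  rfl

variable {π : Measure E} {ρ : E → ℝ}

theorem lintegral_ofReal_ne_top [IsFiniteMeasure π] (hρ1 : ∀ x, ρ x ≤ 1) :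
    ∫⁻ x, ENNReal.ofReal (ρ x) ∂π ≠ ⊤ :=
  ((lintegral_mono fun x => ofReal_le_one.mpr (hρ1 x)).trans_lt (by simp)).ne

theorem lintegral_ofReal_ne_zero [NeZero π] (hρm : Measurable ρ) (hρ0 : ∀ x, 0 < ρ x) :
    ∫⁻ x, ENNReal.ofReal (ρ x) ∂π ≠ 0 := by
  rw [Ne, lintegral_eq_zero_iff hρm.ennreal_ofReal]
  intro hzero
  obtain ⟨x, hx⟩ := hzero.exists
  exact (ofReal_pos.mpr (hρ0 x)).ne' hx

theorem integral_reweighted (hρm : Measurable ρ) (hρ0 : ∀ x, 0 ≤ ρ x) (g : E → ℝ) :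
    ∫ x, g x ∂reweighted π ρ
      = (∫⁻ x, ENNReal.ofReal (ρ x) ∂π).toReal⁻¹ * ∫ x, ρ x * g x ∂π := by
  rw [reweighted, integral_smul_measure, integral_withDensity_eq_integral_toReal_smul
    hρm.ennreal_ofReal (ae_of_all _ fun _ => ofReal_lt_top), toReal_inv, smul_eq_mul]
  simp only [toReal_ofReal (hρ0 _), smul_eq_mul]

theorem lintegral_reweighted (hρm : Measurable ρ) {φ : E → ℝ≥0∞} (hφ : Measurable φ) :
    ∫⁻ x, φ x ∂reweighted π ρ
      = (∫⁻ x, ENNReal.ofReal (ρ x) ∂π)⁻¹ * ∫⁻ x, ENNReal.ofReal (ρ x) * φ x ∂π := by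
  rw [reweighted, lintegral_smul_measure,
    lintegral_withDensity_eq_lintegral_mul π hρm.ennreal_ofReal hφ]
  rfl

theorem MeasureTheory.MemLp.reweighted {p : ℝ≥0∞} {h : E → ℝ} (hh : MemLp h p π)
    (hρ1 : ∀ x, ρ x ≤ 1) (hc : ∫⁻ x, ENNReal.ofReal (ρ x) ∂π ≠ 0) : MemLp h p (reweighted π ρ) := by
  have hle : π.withDensity (fun x => ENNReal.ofReal (ρ x)) ≤ π :=
    (withDensity_mono (ae_of_all _ fun x => ofReal_le_one.mpr (hρ1 x))).trans_eq withDensity_one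
  exact (hh.mono_measure hle).smul_measure (inv_ne_top.mpr hc)

theorem AEMeasurable.ae_eventuallyEq_dirac {β : Type*} [MeasurableSpace β]
    [MeasurableSingletonClass β] {h : E → β} (hh : AEMeasurable h π) :
    ∀ᵐ x ∂π, h =ᵐ[Measure.dirac x] fun _ => h x := by
  -- `δ_x` only sees measurable sets, so the exceptional set of `h = mk h` is enlarged to a
  -- measurable null set `t`, and `x ∉ t`.
  obtain ⟨t, hsub, htm, ht⟩ := exists_measurable_superset_of_null hh.ae_eq_mk
  filter_upwards [measure_eq_zero_iff_ae_notMem.mp ht] with x hx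
  have hmk : ∀ᵐ y ∂Measure.dirac x, h y = hh.mk h y := by
    filter_upwards [(ae_dirac_iff htm.compl).mpr hx] with y hy
    exact not_not.mp fun hne => hy (hsub hne)
  have hxmk : h x = hh.mk h x := not_not.mp fun hne => hx (hsub hne)
  filter_upwards [hmk, ae_eq_dirac' hh.measurable_mk] with y hy hy'
  rw [hy, hy', hxmk]
  rfl

theorem integral_smul_add_smul_dirac {K : Measure E} {a : ℝ} (ha : 0 < a) {b : ℝ≥0∞}
    (hb : b ≠ ⊤) {x : E} {g : E → ℝ} (hg : g =ᵐ[Measure.dirac x] 0) :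
    ∫ y, g y ∂(ENNReal.ofReal a • K + b • Measure.dirac x) = a * ∫ y, g y ∂K := by
  by_cases hint : Integrable g K
  · have hδ : Integrable g (b • Measure.dirac x) :=
      ((integrable_zero _ _ _).congr hg.symm).smul_measure hb
    rw [integral_add_measure (hint.smul_measure ofReal_ne_top) hδ, integral_smul_measure,
      integral_smul_measure, integral_congr_ae hg, toReal_ofReal ha.le]
    simp
  · have hint' : ¬ Integrable g (ENNReal.ofReal a • K + b • Measure.dirac x) := fun h =>
      hint <| (integrable_smul_measure (ofReal_pos.mpr ha).ne' ofReal_ne_top).mp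
        (h.mono_measure (Measure.le_add_right le_rfl))
    rw [integral_undef hint, integral_undef hint', mul_zero]

theorem dirichletFormR_reweighted (hρm : Measurable ρ) (hρ0 : ∀ x, 0 < ρ x) (K : E → Measure E)
    {h : E → ℝ} (hh : AEMeasurable h π) :
    dirichletFormR (reweighted π ρ) K h
      = (∫⁻ x, ENNReal.ofReal (ρ x) ∂π).toReal⁻¹ * dirichletFormR π (lazyKernel ρ K) h := by
  have hlazy : ∀ᵐ x ∂π, ∫ y, (h y - h x) ^ 2 ∂lazyKernel ρ K x
      = ρ x * ∫ y, (h y - h x) ^ 2 ∂K x := by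
    filter_upwards [hh.ae_eventuallyEq_dirac] with x hx
    refine integral_smul_add_smul_dirac (hρ0 x) ofReal_ne_top ?_
    filter_upwards [hx] with y hy
    simp [hy]
  rw [dirichletFormR, dirichletFormR, integral_congr_ae hlazy,
    integral_reweighted hρm fun x => (hρ0 x).le]
  ring

theorem integral_div_mul_reweighted (hρm : Measurable ρ) (hρ0 : ∀ x, 0 < ρ x) (f h : E → ℝ) :
    ∫ x, f x / ρ x * h x ∂reweighted π ρ
      = (∫⁻ x, ENNReal.ofReal (ρ x) ∂π).toReal⁻¹ * ∫ x, f x * h x ∂π := by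
  rw [integral_reweighted hρm fun x => (hρ0 x).le]
  congr 2 with x
  field_simp [(hρ0 x).ne']

theorem variationalSup_lazyKernel_le [IsFiniteMeasure π] [NeZero π] (hρm : Measurable ρ)
    (hρ : ∀ x, 0 < ρ x ∧ ρ x ≤ 1) (K : E → Measure E) (f : E → ℝ) :
    variationalSup π (lazyKernel ρ K) f
      ≤ (∫⁻ x, ENNReal.ofReal (ρ x) ∂π) * variationalSup (reweighted π ρ) K fun x => f x / ρ x := by
  have hcR : (∫⁻ x, ENNReal.ofReal (ρ x) ∂π).toReal ≠ 0 :=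
    (toReal_pos (lintegral_ofReal_ne_zero hρm fun x => (hρ x).1)
      (lintegral_ofReal_ne_top fun x => (hρ x).2)).ne'
  refine iSup_le fun h => ?_
  have hterm : 2 * ∫ x, f x * h.1 x ∂π - dirichletFormR π (lazyKernel ρ K) h.1
      = (∫⁻ x, ENNReal.ofReal (ρ x) ∂π).toReal * (2 * ∫ x, f x / ρ x * h.1 x ∂reweighted π ρ
          - dirichletFormR (reweighted π ρ) K h.1) := by
    rw [integral_div_mul_reweighted hρm (fun x => (hρ x).1),
      dirichletFormR_reweighted hρm (fun x => (hρ x).1) K h.2.aestronglyMeasurable.aemeasurable]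
    field_simp
  rw [hterm, ofReal_mul toReal_nonneg, ofReal_toReal (lintegral_ofReal_ne_top fun x => (hρ x).2)]
  have hmem : MemLp h.1 2 (reweighted π ρ) :=
    h.2.reweighted (fun x => (hρ x).2) (lintegral_ofReal_ne_zero hρm fun x => (hρ x).1)
  gcongr
  exact le_iSup_of_le (⟨h.1, hmem⟩ : {h // MemLp h 2 (reweighted π ρ)}) le_rfl

theorem lintegral_ofReal_sq_div_eq [IsFiniteMeasure π] [NeZero π] (hρm : Measurable ρ)
    (hρ : ∀ x, 0 < ρ x ∧ ρ x ≤ 1) {f : E → ℝ} (hfm : Measurable f)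
    (hfρ : MemLp (fun x => f x / ρ x) 2 (reweighted π ρ)) :
    ∫⁻ x, ENNReal.ofReal (f x ^ 2 / ρ x) ∂π
      = (∫⁻ x, ENNReal.ofReal (ρ x) ∂π)
          * ENNReal.ofReal (∫ x, (f x / ρ x) ^ 2 ∂reweighted π ρ) := by
  rw [ofReal_integral_eq_lintegral_ofReal hfρ.integrable_sq (ae_of_all _ fun _ => sq_nonneg _),
    lintegral_reweighted (φ := fun x => ENNReal.ofReal ((f x / ρ x) ^ 2)) hρm (by fun_prop),
    ← mul_assoc,
    ENNReal.mul_inv_cancel (lintegral_ofReal_ne_zero hρm fun x => (hρ x).1)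
      (lintegral_ofReal_ne_top fun x => (hρ x).2), one_mul]
  refine lintegral_congr fun x => ?_
  rw [← ofReal_mul (hρ x).1.le]
  congr 1
  field_simp [(hρ x).1.ne']

theorem lintegral_ofReal_sq_div_ne_top [IsFiniteMeasure π] [NeZero π] (hρm : Measurable ρ)
    (hρ : ∀ x, 0 < ρ x ∧ ρ x ≤ 1) {f : E → ℝ} (hfm : Measurable f)
    (hfρ : MemLp (fun x => f x / ρ x) 2 (reweighted π ρ)) :
    ∫⁻ x, ENNReal.ofReal (f x ^ 2 / ρ x) ∂π ≠ ⊤ := by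
  rw [lintegral_ofReal_sq_div_eq hρm hρ hfm hfρ]
  exact mul_ne_top (lintegral_ofReal_ne_top fun x => (hρ x).2) ofReal_ne_top

theorem ofReal_integral_sq_eq_lintegral (hρ : ∀ x, 0 < ρ x ∧ ρ x ≤ 1) {f : E → ℝ}
    (hfm : Measurable f) (hfin : ∫⁻ x, ENNReal.ofReal (f x ^ 2 / ρ x) ∂π ≠ ⊤) :
    ENNReal.ofReal (∫ x, f x ^ 2 ∂π) = ∫⁻ x, ENNReal.ofReal (f x ^ 2) ∂π := by
  have hle : ∫⁻ x, ENNReal.ofReal (f x ^ 2) ∂π ≤ ∫⁻ x, ENNReal.ofReal (f x ^ 2 / ρ x) ∂π :=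
    lintegral_mono fun x => ofReal_le_ofReal <|
      (le_div_iff₀ (hρ x).1).mpr (mul_le_of_le_one_right (sq_nonneg _) (hρ x).2)
  have hint : Integrable (fun x => f x ^ 2) π :=
    ⟨(hfm.pow_const 2).aestronglyMeasurable,
      (hasFiniteIntegral_iff_ofReal (ae_of_all _ fun _ => sq_nonneg _)).mpr
        (hle.trans_lt hfin.lt_top)⟩
  exact ofReal_integral_eq_lintegral_ofReal hint (ae_of_all _ fun _ => sq_nonneg _)

theorem asympVar_lazyKernel_le [IsFiniteMeasure π] [NeZero π] (hρm : Measurable ρ)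
    (hρ : ∀ x, 0 < ρ x ∧ ρ x ≤ 1) (K : E → Measure E) {f : E → ℝ} (hfm : Measurable f)
    (hfρ : MemLp (fun x => f x / ρ x) 2 (reweighted π ρ)) :
    asympVar π (lazyKernel ρ K) f
      ≤ (∫⁻ x, ENNReal.ofReal (ρ x) ∂π) * asympVar (reweighted π ρ) K (fun x => f x / ρ x)
        + ∫⁻ x, ENNReal.ofReal (f x ^ 2 / ρ x) ∂π - ∫⁻ x, ENNReal.ofReal (f x ^ 2) ∂π := by
  set c := ∫⁻ x, ENNReal.ofReal (ρ x) ∂π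
  set S := variationalSup (reweighted π ρ) K fun x => f x / ρ x
  set q := ENNReal.ofReal (∫ x, (f x / ρ x) ^ 2 ∂reweighted π ρ)
  have hvar : asympVar (reweighted π ρ) K (fun x => f x / ρ x) = 2 * S - q := rfl
  calc asympVar π (lazyKernel ρ K) f
      = 2 * variationalSup π (lazyKernel ρ K) f - ∫⁻ x, ENNReal.ofReal (f x ^ 2) ∂π := by
        rw [asympVar_eq_variationalSup, ofReal_integral_sq_eq_lintegral hρ hfm
          (lintegral_ofReal_sq_div_ne_top hρm hρ hfm hfρ)]
    _ ≤ c * (2 * S) - ∫⁻ x, ENNReal.ofReal (f x ^ 2) ∂π := by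
        rw [mul_left_comm]
        gcongr
        exact variationalSup_lazyKernel_le hρm hρ K f
    _ ≤ c * (asympVar (reweighted π ρ) K (fun x => f x / ρ x) + q)
          - ∫⁻ x, ENNReal.ofReal (f x ^ 2) ∂π := by
        rw [hvar]
        gcongr
        exact le_tsub_add
    _ = _ := by rw [mul_add, lintegral_ofReal_sq_div_eq hρm hρ hfm hfρ]

end

theorem stmt16_general {E : Type*} [MeasurableSpace E] (π : Measure E) [IsProbabilityMeasure π]
    (ρ : E → ℝ) (hρm : Measurable ρ) (hρ : ∀ x, 0 < ρ x ∧ ρ x ≤ 1)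
    (Pt : E → Measure E)
    (f : E → ℝ) (hfm : Measurable f)
    (hfρ : MemLp (fun x => f x / ρ x) 2
      ((∫⁻ x, ENNReal.ofReal (ρ x) ∂π)⁻¹ • π.withDensity (fun x => ENNReal.ofReal (ρ x))))
    (hvart : asympVar
        ((∫⁻ x, ENNReal.ofReal (ρ x) ∂π)⁻¹ • π.withDensity (fun x => ENNReal.ofReal (ρ x))) Pt
        (fun x => f x / ρ x) < ⊤) :
    asympVar π
        (fun x => ENNReal.ofReal (ρ x) • Pt x + ENNReal.ofReal (1 - ρ x) • Measure.dirac x) f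
      ≤ (∫⁻ x, ENNReal.ofReal (ρ x) ∂π) *
          asympVar
            ((∫⁻ x, ENNReal.ofReal (ρ x) ∂π)⁻¹ • π.withDensity (fun x => ENNReal.ofReal (ρ x)))
            Pt (fun x => f x / ρ x)
        + ∫⁻ x, ENNReal.ofReal (f x ^ 2 / ρ x) ∂π - ∫⁻ x, ENNReal.ofReal (f x ^ 2) ∂π ∧
    asympVar π
        (fun x => ENNReal.ofReal (ρ x) • Pt x + ENNReal.ofReal (1 - ρ x) • Measure.dirac x) f
      < ⊤ := by
  have hmain := asympVar_lazyKernel_le hρm hρ Pt hfm hfρ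
  refine ⟨hmain, hmain.trans_lt (tsub_le_self.trans_lt (add_lt_top.mpr ⟨?_, ?_⟩))⟩
  · exact mul_lt_top (lintegral_ofReal_ne_top fun x => (hρ x).2).lt_top hvart
  · exact (lintegral_ofReal_sq_div_ne_top hρm hρ hfm hfρ).lt_top

/-- Let `P(x,·) = ρ(x) P̃(x,·) + (1−ρ(x)) δ_x` be `π`-reversible with `ρ : E → (0,1]` and
`P̃` reversible with respect to `π̃ = π(ρ)⁻¹·ρ·π`. For `f` with `π(f) = 0`, if
`f/ρ ∈ L²₀(E, π̃)` and `var(f/ρ, P̃) < ∞`, then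
`var(f, P) ≤ π(ρ)·var(f/ρ, P̃) + π(f²/ρ) − π(f²) < ∞`. -/
theorem stmt16 {E : Type*} [MeasurableSpace E] (π : Measure E) [IsProbabilityMeasure π]
    (ρ : E → ℝ) (hρm : Measurable ρ) (hρ : ∀ x, 0 < ρ x ∧ ρ x ≤ 1)
    (Pt : E → Measure E) (hPt : ∀ x, IsProbabilityMeasure (Pt x))
    (hrevt : IsReversible
      ((∫⁻ x, ENNReal.ofReal (ρ x) ∂π)⁻¹ • π.withDensity (fun x => ENNReal.ofReal (ρ x))) Pt)
    (hrevP : IsReversible π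
      (fun x => ENNReal.ofReal (ρ x) • Pt x + ENNReal.ofReal (1 - ρ x) • Measure.dirac x))
    (f : E → ℝ) (hfm : Measurable f) (hf0 : ∫ x, f x ∂π = 0)
    (hfρ : MemLp (fun x => f x / ρ x) 2
      ((∫⁻ x, ENNReal.ofReal (ρ x) ∂π)⁻¹ • π.withDensity (fun x => ENNReal.ofReal (ρ x))))
    (hfρ0 : ∫ x, f x / ρ x
      ∂((∫⁻ x, ENNReal.ofReal (ρ x) ∂π)⁻¹ • π.withDensity (fun x => ENNReal.ofReal (ρ x))) = 0)
    (hvart : asympVar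
        ((∫⁻ x, ENNReal.ofReal (ρ x) ∂π)⁻¹ • π.withDensity (fun x => ENNReal.ofReal (ρ x))) Pt
        (fun x => f x / ρ x) < ⊤) :
    asympVar π
        (fun x => ENNReal.ofReal (ρ x) • Pt x + ENNReal.ofReal (1 - ρ x) • Measure.dirac x) f
      ≤ (∫⁻ x, ENNReal.ofReal (ρ x) ∂π) *
          asympVar
            ((∫⁻ x, ENNReal.ofReal (ρ x) ∂π)⁻¹ • π.withDensity (fun x => ENNReal.ofReal (ρ x)))
            Pt (fun x => f x / ρ x)
        + ∫⁻ x, ENNReal.ofReal (f x ^ 2 / ρ x) ∂π - ∫⁻ x, ENNReal.ofReal (f x ^ 2) ∂π ∧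
    asympVar π
        (fun x => ENNReal.ofReal (ρ x) • Pt x + ENNReal.ofReal (1 - ρ x) • Measure.dirac x) f
      < ⊤ :=
  stmt16_general π ρ hρm hρ Pt f hfm hfρ hvart
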